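/- The set of functionals in GL_0(G)* having compact carrier is norm dense in GL_0(G)*. -/

import Mathlib

set_option linter.unusedSectionVars false
set_option linter.unusedVariables false

open MeasureTheory ENNReal Complex Filter Set Topology

noncomputable section

namespace GLpaper

variable (G : Type) [Group G] [TopologicalSpace G] [MeasurableSpace G]

def cmAbs (μ : ComplexMeasure G) : Measure G :=
  (ComplexMeasure.re μ).totalVariation + (ComplexMeasure.im μ).totalVariation

instance (μ : ComplexMeasure G) : IsFiniteMeasure (cmAbs G μ) := by
  unfold cmAbs SignedMeasure.totalVariation; infer_instance

structure MG where
  toCM : ComplexMeasure G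
  regular : (cmAbs G toCM).Regular

def cInt (μ : ComplexMeasure G) (g : G → ℂ) : ℂ :=
  ((∫ x, g x ∂(ComplexMeasure.re μ).toJordanDecomposition.posPart) -
      ∫ x, g x ∂(ComplexMeasure.re μ).toJordanDecomposition.negPart) +
    Complex.I * ((∫ x, g x ∂(ComplexMeasure.im μ).toJordanDecomposition.posPart) -
      ∫ x, g x ∂(ComplexMeasure.im μ).toJordanDecomposition.negPart)

structure GenFun where
  toFun : ∀ μ : MG G, Lp ℂ ⊤ (cmAbs G μ.toCM)
  compat : ∀ μ ν : MG G, cmAbs G μ.toCM ≪ cmAbs G ν.toCM →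
    ⇑(toFun μ) =ᵐ[cmAbs G μ.toCM] ⇑(toFun ν)
  bdd : BddAbove (Set.range fun μ : MG G => ‖toFun μ‖)

namespace GenFun

variable {G}

theorem ext' {f g : GenFun G} (h : ∀ μ, f.toFun μ = g.toFun μ) : f = g := by
  cases f; cases g
  simp only [GenFun.mk.injEq]
  exact funext h

instance : Zero (GenFun G) where
  zero :=
  { toFun := fun _ => 0
    compat := by
      intro μ ν h
      filter_upwards [Lp.coeFn_zero ℂ ⊤ (cmAbs G μ.toCM),
        (Lp.coeFn_zero ℂ ⊤ (cmAbs G ν.toCM)).filter_mono h.ae_le] with x e1 e2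
      rw [e1, e2]
    bdd := ⟨0, by rintro r ⟨μ, rfl⟩; simp⟩ }

instance : Add (GenFun G) where
  add f g :=
  { toFun := fun μ => f.toFun μ + g.toFun μ
    compat := by
      intro μ ν h
      filter_upwards [f.compat μ ν h, g.compat μ ν h,
        Lp.coeFn_add (f.toFun μ) (g.toFun μ),
        (Lp.coeFn_add (f.toFun ν) (g.toFun ν)).filter_mono h.ae_le] with x e1 e2 e3 e4
      simp only [e3, e4, Pi.add_apply, e1, e2]
    bdd := by
      obtain ⟨Cf, hCf⟩ := f.bdd
      obtain ⟨Cg, hCg⟩ := g.bdd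
      refine ⟨Cf + Cg, ?_⟩
      rintro r ⟨μ, rfl⟩
      exact (norm_add_le _ _).trans (add_le_add (hCf ⟨μ, rfl⟩) (hCg ⟨μ, rfl⟩)) }

instance : Neg (GenFun G) where
  neg f :=
  { toFun := fun μ => -f.toFun μ
    compat := by
      intro μ ν h
      filter_upwards [f.compat μ ν h, Lp.coeFn_neg (f.toFun μ),
        (Lp.coeFn_neg (f.toFun ν)).filter_mono h.ae_le] with x e1 e2 e3
      simp only [e2, e3, Pi.neg_apply, e1]
    bdd := by
      obtain ⟨Cf, hCf⟩ := f.bdd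
      refine ⟨Cf, ?_⟩
      rintro r ⟨μ, rfl⟩
      simpa using hCf ⟨μ, rfl⟩ }

instance : SMul ℂ (GenFun G) where
  smul c f :=
  { toFun := fun μ => c • f.toFun μ
    compat := by
      intro μ ν h
      filter_upwards [f.compat μ ν h, Lp.coeFn_smul c (f.toFun μ),
        (Lp.coeFn_smul c (f.toFun ν)).filter_mono h.ae_le] with x e1 e2 e3
      simp only [e2, e3, Pi.smul_apply, e1]
    bdd := by
      obtain ⟨Cf, hCf⟩ := f.bdd
      refine ⟨‖c‖ * Cf, ?_⟩
      rintro r ⟨μ, rfl⟩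
      show ‖c • f.toFun μ‖ ≤ ‖c‖ * Cf
      rw [norm_smul]
      exact mul_le_mul_of_nonneg_left (hCf ⟨μ, rfl⟩) (norm_nonneg c) }

@[simp] theorem zero_toFun (μ : MG G) : (0 : GenFun G).toFun μ = 0 := rfl
@[simp] theorem add_toFun (f g : GenFun G) (μ : MG G) :
    (f + g).toFun μ = f.toFun μ + g.toFun μ := rfl
@[simp] theorem neg_toFun (f : GenFun G) (μ : MG G) : (-f).toFun μ = -f.toFun μ := rfl
@[simp] theorem smul_toFun (c : ℂ) (f : GenFun G) (μ : MG G) :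
    (c • f).toFun μ = c • f.toFun μ := rfl

instance : AddCommGroup (GenFun G) where
  add_assoc a b c := ext' fun μ => add_assoc _ _ _
  zero_add a := ext' fun μ => zero_add _
  add_zero a := ext' fun μ => add_zero _
  add_comm a b := ext' fun μ => add_comm _ _
  neg_add_cancel a := ext' fun μ => neg_add_cancel _
  nsmul := nsmulRec
  zsmul := zsmulRec

instance : Module ℂ (GenFun G) where
  one_smul f := ext' fun μ => one_smul _ _
  mul_smul a b f := ext' fun μ => mul_smul _ _ _
  smul_zero a := ext' fun μ => smul_zero _
  smul_add a f g := ext' fun μ => smul_add _ _ _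
  add_smul a b f := ext' fun μ => add_smul _ _ _
  zero_smul f := ext' fun μ => zero_smul _ _

/-- The norm on generalised functions. -/
def gnorm (f : GenFun G) : ℝ := ⨆ μ : MG G, ‖f.toFun μ‖

theorem gnorm_zero : gnorm (0 : GenFun G) = 0 := by
  rcases isEmpty_or_nonempty (MG G) with h | h
  · exact Real.iSup_of_isEmpty _
  · simp [gnorm]

theorem norm_le_gnorm (f : GenFun G) (μ : MG G) : ‖f.toFun μ‖ ≤ gnorm f :=
  le_ciSup f.bdd μ

theorem gnorm_nonneg (f : GenFun G) : 0 ≤ gnorm f := by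
  rcases isEmpty_or_nonempty (MG G) with h | h
  · rw [gnorm, Real.iSup_of_isEmpty]
  · exact le_trans (norm_nonneg _) (norm_le_gnorm f (Classical.arbitrary _))

theorem gnorm_le {f : GenFun G} {C : ℝ} (h0 : 0 ≤ C) (h : ∀ μ, ‖f.toFun μ‖ ≤ C) :
    gnorm f ≤ C := by
  rcases isEmpty_or_nonempty (MG G) with hh | hh
  · rw [gnorm, Real.iSup_of_isEmpty]; exact h0
  · exact ciSup_le h

instance : NormedAddCommGroup (GenFun G) :=
  AddGroupNorm.toNormedAddCommGroup
  { toFun := gnorm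
    map_zero' := gnorm_zero
    add_le' := by
      intro f g
      refine gnorm_le (add_nonneg (gnorm_nonneg f) (gnorm_nonneg g)) fun μ => ?_
      rw [add_toFun]
      exact (norm_add_le _ _).trans (add_le_add (norm_le_gnorm f μ) (norm_le_gnorm g μ))
    neg' := by
      intro f
      unfold gnorm
      congr 1
      funext μ
      rw [neg_toFun, norm_neg]
    eq_zero_of_map_eq_zero' := by
      intro f hf
      refine ext' fun μ => ?_
      have h1 : ‖f.toFun μ‖ ≤ 0 := hf ▸ norm_le_gnorm f μ
      have : ‖f.toFun μ‖ = 0 := le_antisymm h1 (norm_nonneg _)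
      simpa [norm_eq_zero] using this }

theorem norm_def (f : GenFun G) : ‖f‖ = gnorm f := rfl

instance : NormedSpace ℂ (GenFun G) where
  norm_smul_le c f := by
    refine gnorm_le (mul_nonneg (norm_nonneg c) (gnorm_nonneg f)) fun μ => ?_
    rw [smul_toFun, norm_smul]
    exact mul_le_mul_of_nonneg_left (norm_le_gnorm f μ) (norm_nonneg c)

end GenFun

/-- A generalised function vanishes at infinity. -/
def MemGL0 (f : GenFun G) : Prop :=
  ∀ ε : ℝ, 0 < ε → ∃ K : Set G, IsCompact K ∧ ∀ μ : MG G,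
    eLpNorm (Kᶜ.indicator ⇑(f.toFun μ)) ⊤ (cmAbs G μ.toCM) < ENNReal.ofReal ε

variable [T2Space G] [BorelSpace G]

theorem indicator_norm_mono {K L : Set G} (hKL : K ⊆ L) (g : G → ℂ) (x : G) :
    ‖Lᶜ.indicator g x‖ ≤ ‖Kᶜ.indicator g x‖ := by
  by_cases hx : x ∈ Lᶜ
  · rw [Set.indicator_of_mem hx, Set.indicator_of_mem (Set.compl_subset_compl.mpr hKL hx)]
  · rw [Set.indicator_of_notMem hx]
    simp [norm_nonneg]

/-- The space `GL₀(G)` of generalised functions vanishing at infinity, as a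
subspace of `GL(G)`. -/
def GL0 : Submodule ℂ (GenFun G) where
  carrier := {f | MemGL0 G f}
  zero_mem' := by
    intro ε hε
    refine ⟨∅, isCompact_empty, fun μ => ?_⟩
    have h0 : (∅ᶜ : Set G).indicator ⇑((0 : GenFun G).toFun μ)
        =ᵐ[cmAbs G μ.toCM] (0 : G → ℂ) := by
      filter_upwards [Lp.coeFn_zero ℂ ⊤ (cmAbs G μ.toCM)] with x e1
      by_cases hx : x ∈ (∅ᶜ : Set G)
      · rw [Set.indicator_of_mem hx]; exact e1
      · rw [Set.indicator_of_notMem hx]; rfl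
    rw [eLpNorm_congr_ae h0, eLpNorm_zero]
    exact ENNReal.ofReal_pos.mpr hε
  add_mem' := by
    intro f g hf hg ε hε
    obtain ⟨Kf, hKf, hf'⟩ := hf (ε / 2) (by linarith)
    obtain ⟨Kg, hKg, hg'⟩ := hg (ε / 2) (by linarith)
    refine ⟨Kf ∪ Kg, hKf.union hKg, fun μ => ?_⟩
    have hmeas : MeasurableSet ((Kf ∪ Kg)ᶜ : Set G) :=
      ((hKf.union hKg).isClosed.measurableSet).compl
    have hsum : ((Kf ∪ Kg)ᶜ : Set G).indicator ⇑((f + g).toFun μ)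
        =ᵐ[cmAbs G μ.toCM]
        ((Kf ∪ Kg)ᶜ : Set G).indicator ⇑(f.toFun μ) +
        ((Kf ∪ Kg)ᶜ : Set G).indicator ⇑(g.toFun μ) := by
      filter_upwards [Lp.coeFn_add (f.toFun μ) (g.toFun μ)] with x e1
      by_cases hx : x ∈ ((Kf ∪ Kg)ᶜ : Set G)
      · simp only [Set.indicator_of_mem hx, Pi.add_apply, GenFun.add_toFun]
        rw [e1]; rfl
      · simp only [Pi.add_apply, Set.indicator_of_notMem hx, add_zero]
    calc eLpNorm (((Kf ∪ Kg)ᶜ : Set G).indicator ⇑((f + g).toFun μ)) ⊤ (cmAbs G μ.toCM)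
        = eLpNorm (((Kf ∪ Kg)ᶜ : Set G).indicator ⇑(f.toFun μ) +
            ((Kf ∪ Kg)ᶜ : Set G).indicator ⇑(g.toFun μ)) ⊤ (cmAbs G μ.toCM) :=
          eLpNorm_congr_ae hsum
      _ ≤ eLpNorm (((Kf ∪ Kg)ᶜ : Set G).indicator ⇑(f.toFun μ)) ⊤ (cmAbs G μ.toCM) +
            eLpNorm (((Kf ∪ Kg)ᶜ : Set G).indicator ⇑(g.toFun μ)) ⊤ (cmAbs G μ.toCM) :=
          eLpNorm_add_le ((Lp.aestronglyMeasurable (f.toFun μ)).indicator hmeas)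
            ((Lp.aestronglyMeasurable (g.toFun μ)).indicator hmeas) le_top
      _ ≤ eLpNorm ((Kfᶜ : Set G).indicator ⇑(f.toFun μ)) ⊤ (cmAbs G μ.toCM) +
            eLpNorm ((Kgᶜ : Set G).indicator ⇑(g.toFun μ)) ⊤ (cmAbs G μ.toCM) := by
          gcongr
          · exact eLpNorm_mono fun x => indicator_norm_mono G Set.subset_union_left _ x
          · exact eLpNorm_mono fun x => indicator_norm_mono G Set.subset_union_right _ x
      _ < ENNReal.ofReal (ε / 2) + ENNReal.ofReal (ε / 2) :=
          ENNReal.add_lt_add (hf' μ) (hg' μ)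
      _ = ENNReal.ofReal ε := by
          rw [← ENNReal.ofReal_add (by linarith) (by linarith)]
          norm_num
  smul_mem' := by
    intro c f hf ε hε
    obtain ⟨K, hK, hf'⟩ := hf (ε / (‖c‖ + 1)) (by positivity)
    refine ⟨K, hK, fun μ => ?_⟩
    have hsmul : (Kᶜ : Set G).indicator ⇑((c • f).toFun μ)
        =ᵐ[cmAbs G μ.toCM] c • (Kᶜ : Set G).indicator ⇑(f.toFun μ) := by
      filter_upwards [Lp.coeFn_smul c (f.toFun μ)] with x e1
      by_cases hx : x ∈ (Kᶜ : Set G)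
      · simp only [Set.indicator_of_mem hx, Pi.smul_apply, GenFun.smul_toFun]
        rw [e1]; rfl
      · simp only [Pi.smul_apply, Set.indicator_of_notMem hx, smul_zero]
    calc eLpNorm ((Kᶜ : Set G).indicator ⇑((c • f).toFun μ)) ⊤ (cmAbs G μ.toCM)
        = (‖c‖₊ : ℝ≥0∞) * eLpNorm ((Kᶜ : Set G).indicator ⇑(f.toFun μ)) ⊤ (cmAbs G μ.toCM) := by
          rw [eLpNorm_congr_ae hsmul, eLpNorm_const_smul]; rfl
      _ ≤ ENNReal.ofReal ‖c‖ * ENNReal.ofReal (ε / (‖c‖ + 1)) := by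
          rw [ofReal_norm]
          exact mul_le_mul_of_nonneg_left (hf' μ).le zero_le
      _ = ENNReal.ofReal (‖c‖ * (ε / (‖c‖ + 1))) :=
          (ENNReal.ofReal_mul (norm_nonneg c)).symm
      _ < ENNReal.ofReal ε := by
          refine (ENNReal.ofReal_lt_ofReal_iff hε).mpr ?_
          have hpos : (0 : ℝ) < ‖c‖ + 1 := by positivity
          rw [mul_div_assoc', div_lt_iff₀ hpos]
          nlinarith [norm_nonneg c]


section Pairing

theorem rePos_le (μ : ComplexMeasure G) :
    (ComplexMeasure.re μ).toJordanDecomposition.posPart ≤ cmAbs G μ :=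
  (Measure.le_add_right (le_refl _) :
      (ComplexMeasure.re μ).toJordanDecomposition.posPart ≤ (ComplexMeasure.re μ).totalVariation).trans
    (Measure.le_add_right (le_refl _))

theorem reNeg_le (μ : ComplexMeasure G) :
    (ComplexMeasure.re μ).toJordanDecomposition.negPart ≤ cmAbs G μ :=
  (Measure.le_add_left (le_refl _) :
      (ComplexMeasure.re μ).toJordanDecomposition.negPart ≤ (ComplexMeasure.re μ).totalVariation).trans
    (Measure.le_add_right (le_refl _))

theorem imPos_le (μ : ComplexMeasure G) :
    (ComplexMeasure.im μ).toJordanDecomposition.posPart ≤ cmAbs G μ :=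
  (Measure.le_add_right (le_refl _) :
      (ComplexMeasure.im μ).toJordanDecomposition.posPart ≤ (ComplexMeasure.im μ).totalVariation).trans
    (Measure.le_add_left (le_refl _))

theorem imNeg_le (μ : ComplexMeasure G) :
    (ComplexMeasure.im μ).toJordanDecomposition.negPart ≤ cmAbs G μ :=
  (Measure.le_add_left (le_refl _) :
      (ComplexMeasure.im μ).toJordanDecomposition.negPart ≤ (ComplexMeasure.im μ).totalVariation).trans
    (Measure.le_add_left (le_refl _))

variable {G}

theorem ae_norm_le_of_Lp_top {μ : Measure G} (f : Lp ℂ ⊤ μ) :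
    ∀ᵐ x ∂μ, ‖f x‖ ≤ ‖f‖ := by
  have h := enorm_ae_le_eLpNormEssSup (⇑f) μ
  filter_upwards [h] with x hx
  have hlt : eLpNormEssSup (⇑f) μ < ⊤ := by
    have h2 := Lp.eLpNorm_lt_top f
    rwa [eLpNorm_exponent_top] at h2
  have h3 : ((‖f x‖₊ : ℝ≥0∞)).toReal ≤ (eLpNormEssSup (⇑f) μ).toReal :=
    ENNReal.toReal_mono hlt.ne hx
  simpa [Lp.norm_def, eLpNorm_exponent_top] using h3

theorem integrable_part {μ : Measure G} {m : Measure G} [IsFiniteMeasure m] (hm : m ≤ μ)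
    (f : Lp ℂ ⊤ μ) : Integrable (⇑f) m :=
  MemLp.integrable le_top ((Lp.memLp f).mono_measure hm)

variable (G)

/-- The duality pairing between generalised functions and measures,
`⟨f, μ⟩ = ∫ f_μ dμ`. -/
def pair (f : GenFun G) (μ : MG G) : ℂ := cInt G μ.toCM ⇑(f.toFun μ)

theorem pair_add (f g : GenFun G) (μ : MG G) :
    pair G (f + g) μ = pair G f μ + pair G g μ := by
  have key : ∀ m : Measure G, m ≤ cmAbs G μ.toCM → IsFiniteMeasure m →
      ∫ x, ((f + g).toFun μ) x ∂m = (∫ x, (f.toFun μ) x ∂m) + ∫ x, (g.toFun μ) x ∂m := by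
    intro m hm hfin
    have hae : ⇑((f + g).toFun μ) =ᵐ[m] ⇑(f.toFun μ) + ⇑(g.toFun μ) := by
      exact (Measure.absolutelyContinuous_of_le hm).ae_le (Lp.coeFn_add (f.toFun μ) (g.toFun μ))
    rw [integral_congr_ae hae]
    exact integral_add (integrable_part hm (f.toFun μ)) (integrable_part hm (g.toFun μ))
  unfold pair cInt
  rw [key _ (rePos_le G μ.toCM) inferInstance, key _ (reNeg_le G μ.toCM) inferInstance,
    key _ (imPos_le G μ.toCM) inferInstance, key _ (imNeg_le G μ.toCM) inferInstance]
  ring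

theorem pair_smul (c : ℂ) (f : GenFun G) (μ : MG G) :
    pair G (c • f) μ = c * pair G f μ := by
  have key : ∀ m : Measure G, m ≤ cmAbs G μ.toCM →
      ∫ x, ((c • f).toFun μ) x ∂m = c * ∫ x, (f.toFun μ) x ∂m := by
    intro m hm
    have hae : ⇑((c • f).toFun μ) =ᵐ[m] c • ⇑(f.toFun μ) :=
      (Measure.absolutelyContinuous_of_le hm).ae_le (Lp.coeFn_smul c (f.toFun μ))
    rw [integral_congr_ae hae]
    simpa using integral_smul c (⇑(f.toFun μ))
  unfold pair cInt
  rw [key _ (rePos_le G μ.toCM), key _ (reNeg_le G μ.toCM),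
    key _ (imPos_le G μ.toCM), key _ (imNeg_le G μ.toCM)]
  ring

/-- The total mass bound associated to a measure. -/
def massBound (μ : MG G) : ℝ :=
  ((cmAbs G μ.toCM) Set.univ).toReal

theorem pair_norm_le (f : GenFun G) (μ : MG G) :
    ‖pair G f μ‖ ≤ 4 * massBound G μ * ‖f‖ := by
  have key : ∀ m : Measure G, m ≤ cmAbs G μ.toCM → IsFiniteMeasure m →
      ‖∫ x, (f.toFun μ) x ∂m‖ ≤ massBound G μ * ‖f‖ := by
    intro m hm hfin
    have hb : ∀ᵐ x ∂m, ‖(f.toFun μ) x‖ ≤ ‖f.toFun μ‖ :=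
      (Measure.absolutelyContinuous_of_le hm).ae_le (ae_norm_le_of_Lp_top (f.toFun μ))
    have h1 : ‖∫ x, (f.toFun μ) x ∂m‖ ≤ ‖f.toFun μ‖ * (m Set.univ).toReal :=
      norm_integral_le_of_norm_le_const hb
    have h2 : (m Set.univ).toReal ≤ massBound G μ := by
      refine ENNReal.toReal_mono (measure_ne_top _ _) (hm Set.univ)
    calc ‖∫ x, (f.toFun μ) x ∂m‖ ≤ ‖f.toFun μ‖ * (m Set.univ).toReal := h1
      _ ≤ ‖f‖ * massBound G μ := by
          apply mul_le_mul (GenFun.norm_le_gnorm f μ) h2 ENNReal.toReal_nonneg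
          exact (norm_nonneg _).trans (GenFun.norm_le_gnorm f μ)
      _ = massBound G μ * ‖f‖ := mul_comm _ _
  unfold pair cInt
  have k1 := key _ (rePos_le G μ.toCM) inferInstance
  have k2 := key _ (reNeg_le G μ.toCM) inferInstance
  have k3 := key _ (imPos_le G μ.toCM) inferInstance
  have k4 := key _ (imNeg_le G μ.toCM) inferInstance
  calc ‖_ + _‖ ≤ _ := norm_add_le _ _
    _ ≤ 4 * massBound G μ * ‖f‖ := by
        have e1 := norm_sub_le (∫ x, (f.toFun μ) x ∂(ComplexMeasure.re μ.toCM).toJordanDecomposition.posPart)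
          (∫ x, (f.toFun μ) x ∂(ComplexMeasure.re μ.toCM).toJordanDecomposition.negPart)
        have e2 := norm_sub_le (∫ x, (f.toFun μ) x ∂(ComplexMeasure.im μ.toCM).toJordanDecomposition.posPart)
          (∫ x, (f.toFun μ) x ∂(ComplexMeasure.im μ.toCM).toJordanDecomposition.negPart)
        have e3 : ‖Complex.I * ((∫ x, (f.toFun μ) x ∂(ComplexMeasure.im μ.toCM).toJordanDecomposition.posPart) -
            ∫ x, (f.toFun μ) x ∂(ComplexMeasure.im μ.toCM).toJordanDecomposition.negPart)‖ =
            ‖(∫ x, (f.toFun μ) x ∂(ComplexMeasure.im μ.toCM).toJordanDecomposition.posPart) -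
            ∫ x, (f.toFun μ) x ∂(ComplexMeasure.im μ.toCM).toJordanDecomposition.negPart‖ := by
          rw [norm_mul, Complex.norm_I, one_mul]
        rw [e3]
        nlinarith [k1, k2, k3, k4]

/-- The canonical embedding of `M(G)` into the dual of `GL(G)` (w.r.t. the
pairing `⟨f, η⟩ = ∫ f_η dη`), i.e. `Ψ⁻¹`-transpose. -/
def measFun (η : MG G) : GenFun G →L[ℂ] ℂ :=
  LinearMap.mkContinuous
    { toFun := fun f => pair G f η
      map_add' := fun f g => pair_add G f g η
      map_smul' := fun c f => pair_smul G c f η }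
    (4 * massBound G η) (fun f => pair_norm_le G f η)

end Pairing


/-- The dual space `GL₀(G)*`. -/
abbrev DualGL0 := ↥(GL0 G) →L[ℂ] ℂ

/-- The second dual `M(G)** = GL(G)*`. -/
abbrev DualGL := GenFun G →L[ℂ] ℂ

/-- The embedding of `M(G)` into `GL₀(G)*`. -/
def measFun0 (η : MG G) : DualGL0 G := (measFun G η).comp (GL0 G).subtypeL

/-- The restriction map `M(G)** → GL₀(G)*`. -/
def restrict0 (m : DualGL G) : DualGL0 G := m.comp (GL0 G).subtypeL


open scoped ZeroAtInfty

section Predicates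

/-- A generalised function is positive (in the C*-algebra sense), equivalently
all its coordinates are a.e. nonnegative. -/
def NonnegGF (f : GenFun G) : Prop :=
  ∀ μ : MG G, ∀ᵐ x ∂(cmAbs G μ.toCM), ∃ r : ℝ, 0 ≤ r ∧ (f.toFun μ) x = r

/-- A complex measure is positive. -/
def NonnegCM (μ : ComplexMeasure G) : Prop :=
  ∀ A : Set G, MeasurableSet A → ∃ r : ℝ, 0 ≤ r ∧ μ A = r

/-- `g` represents the pointwise function `u` as a generalised function. -/
def IsRepFun (u : G → ℂ) (g : GenFun G) : Prop :=
  ∀ μ : MG G, ⇑(g.toFun μ) =ᵐ[cmAbs G μ.toCM] u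

/-- `g = χ_K ⬝ f` coordinatewise. -/
def IsIndMul (K : Set G) (f g : GenFun G) : Prop :=
  ∀ μ : MG G, ⇑(g.toFun μ) =ᵐ[cmAbs G μ.toCM] K.indicator ⇑(f.toFun μ)

/-- `g = u ⬝ f` coordinatewise. -/
def IsMulFun (u : G → ℂ) (f g : GenFun G) : Prop :=
  ∀ μ : MG G, ⇑(g.toFun μ) =ᵐ[cmAbs G μ.toCM] fun x => u x * (f.toFun μ) x

/-- `conv` is the convolution product of `M(G)`:
`⟨μ ∗ ν, g⟩ = ∫∫ g(xy) dμ(x) dν(y)` for `g ∈ C₀(G)`. -/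
def IsConvOp (conv : MG G → MG G → MG G) : Prop :=
  ∀ μ ν : MG G, ∀ g : C₀(G, ℂ),
    cInt G (conv μ ν).toCM ⇑g = cInt G μ.toCM fun x => cInt G ν.toCM fun y => g (x * y)

/-- `circ ζ f` is the generalised function `ζ ∘ f`, satisfying
`⟨ζ ∘ f, μ⟩ = ⟨f, ζ ∗ μ⟩`. -/
def IsLCirc (conv : MG G → MG G → MG G) (circ : MG G → GenFun G → GenFun G) : Prop :=
  ∀ (ζ : MG G) (f : GenFun G) (μ : MG G), pair G (circ ζ f) μ = pair G f (conv ζ μ)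

/-- `rcirc f ζ` is the generalised function `f ∘ ζ`, satisfying
`⟨f ∘ ζ, μ⟩ = ⟨f, μ ∗ ζ⟩`. -/
def IsRCirc (conv : MG G → MG G → MG G) (rcirc : GenFun G → MG G → GenFun G) : Prop :=
  ∀ (f : GenFun G) (ζ : MG G) (μ : MG G), pair G (rcirc f ζ) μ = pair G f (conv μ ζ)

/-- The map `ζ ∘ ·` restricted to `GL₀(G)` (by Lemma 3.3 it maps `GL₀(G)` to
itself). -/
def IsLCirc0 (conv : MG G → MG G → MG G) (circ0 : MG G → ↥(GL0 G) → ↥(GL0 G)) : Prop :=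
  ∀ (ζ : MG G) (f : ↥(GL0 G)) (μ : MG G), pair G (circ0 ζ f : GenFun G) μ = pair G (f : GenFun G) (conv ζ μ)

/-- The map `· ∘ ζ` restricted to `GL₀(G)`. -/
def IsRCirc0 (conv : MG G → MG G → MG G) (rcirc0 : ↥(GL0 G) → MG G → ↥(GL0 G)) : Prop :=
  ∀ (f : ↥(GL0 G)) (ζ : MG G) (μ : MG G), pair G (rcirc0 f ζ : GenFun G) μ = pair G (f : GenFun G) (conv μ ζ)

/-- `lt0 n f` is the generalised function `n·f ∈ GL₀(G)` determined by
`⟨n f, ζ⟩ = ⟨n, ζ ∘ f⟩`. -/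
def IsLT0 (circ0 : MG G → ↥(GL0 G) → ↥(GL0 G)) (lt0 : DualGL0 G → ↥(GL0 G) → ↥(GL0 G)) : Prop :=
  ∀ (n : DualGL0 G) (f : ↥(GL0 G)) (ζ : MG G),
    pair G (lt0 n f : GenFun G) ζ = n (circ0 ζ f)

/-- The Arens-type product `⊙` on `GL₀(G)*`: `⟨m ⊙ n, f⟩ = ⟨m, n f⟩`. -/
def IsOdot0 (lt0 : DualGL0 G → ↥(GL0 G) → ↥(GL0 G))
    (odot : DualGL0 G → DualGL0 G → DualGL0 G) : Prop :=
  ∀ (m n : DualGL0 G) (f : ↥(GL0 G)), odot m n f = m (lt0 n f)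

/-- `ltF n f` is the generalised function `n·f` determined by
`⟨n f, ζ⟩ = ⟨n, ζ ∘ f⟩`, for `n ∈ M(G)** = GL(G)*`. -/
def IsLTF (circ : MG G → GenFun G → GenFun G) (ltF : DualGL G → GenFun G → GenFun G) : Prop :=
  ∀ (n : DualGL G) (f : GenFun G) (ζ : MG G), pair G (ltF n f) ζ = n (circ ζ f)

/-- The first Arens product `⊙` on `M(G)**`: `⟨m ⊙ n, f⟩ = ⟨m, n f⟩`. -/
def IsOdotF (ltF : DualGL G → GenFun G → GenFun G)
    (odotF : DualGL G → DualGL G → DualGL G) : Prop :=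
  ∀ (m n : DualGL G) (f : GenFun G), odotF m n f = m (ltF n f)

/-- A functional in `GL₀(G)*` has compact carrier `K`. -/
def HasCarrier0 (m : DualGL0 G) (K : Set G) : Prop :=
  IsCompact K ∧ ∀ f g : ↥(GL0 G), IsIndMul G K (f : GenFun G) (g : GenFun G) → m g = m f

/-- A functional in `M(G)**` has compact carrier `K`. -/
def HasCarrierF (m : DualGL G) (K : Set G) : Prop :=
  IsCompact K ∧ ∀ f g : GenFun G, IsIndMul G K f g → m g = m f

/-- `M_c(G)**`, the norm closure of the set of functionals with compact carrier
in `M(G)**`. -/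
def McSet : Set (DualGL G) := closure {m : DualGL G | ∃ K : Set G, HasCarrierF G m K}

/-- A positive functional. -/
def IsPosFunc0 (m : DualGL0 G) : Prop :=
  ∀ f : ↥(GL0 G), NonnegGF G (f : GenFun G) → ∃ r : ℝ, 0 ≤ r ∧ m f = r

/-- A positive functional on `GL(G)`. -/
def IsPosFuncF (m : DualGL G) : Prop :=
  ∀ f : GenFun G, NonnegGF G f → ∃ r : ℝ, 0 ≤ r ∧ m f = r

/-- The operator `T` maps the unit ball of `S` into a norm-compact set
(relative compactness of the image of the unit ball). -/
def CCBallOn (T : DualGL0 G → DualGL0 G) (S : Set (DualGL0 G)) : Prop :=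
  ∃ K : Set (DualGL0 G), IsCompact K ∧ ∀ n ∈ S, ‖n‖ ≤ 1 → T n ∈ K

/-- The operator `T` maps the unit ball of `S` into a weakly compact set. -/
def WCCBallOn (T : DualGL0 G → DualGL0 G) (S : Set (DualGL0 G)) : Prop :=
  ∃ K : Set (WeakSpace ℂ (DualGL0 G)), IsCompact K ∧
    ∀ n ∈ S, ‖n‖ ≤ 1 → toWeakSpace ℂ (DualGL0 G) (T n) ∈ K

/-- The image of `M_a(G)` in `GL₀(G)*`. -/
def MaSet (lam : Measure G) : Set (DualGL0 G) :=
  {n : DualGL0 G | ∃ σ : MG G, cmAbs G σ.toCM ≪ lam ∧ n = measFun0 G σ}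

end Predicates

end GLpaper

open GLpaper

/-!
For compact `K`, multiplication by `χ_K` is an M-projection `P` of `GL₀(G)`:
`‖f‖ = max ‖P f‖ ‖f - P f‖`, because every coordinate `f_μ` is an `L^∞` function. Dually,
`‖m - m ∘ P‖ ≤ ‖m‖ - ‖m (P f)‖` whenever `‖f‖ ≤ 1`, while `m ∘ P` has carrier `K`. Pick `f` in the
unit ball with `‖m f‖` close to `‖m‖`, then `K` with `f - P f` small (`f` vanishes at infinity):
`‖m (P f)‖` is then close to `‖m‖`, so `m ∘ P` is close to `m`.
-/

namespace IsMprojection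

variable {X M : Type*} [NormedAddCommGroup X] [Ring M] [Module M X] {P : M}

theorem norm_smul_le (h : IsMprojection X P) (x : X) : ‖P • x‖ ≤ ‖x‖ :=
  (h.Mnorm x).symm ▸ le_max_left _ _

theorem norm_one_sub_smul_le (h : IsMprojection X P) (x : X) : ‖(1 - P) • x‖ ≤ ‖x‖ :=
  (h.Mnorm x).symm ▸ le_max_right _ _

theorem norm_smul_add_one_sub_smul_le (h : IsMprojection X P) (x y : X) :
    ‖P • x + (1 - P) • y‖ ≤ max ‖x‖ ‖y‖ := by
  have hP : P * P = P := h.proj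
  have hPQ : P * (1 - P) = 0 := by rw [mul_sub, mul_one, hP, sub_self]
  have hQP : (1 - P) * P = 0 := by rw [sub_mul, one_mul, hP, sub_self]
  have hQ : (1 - P) * (1 - P) = 1 - P := h.proj.one_sub
  rw [h.Mnorm]
  simp only [smul_add, smul_smul, hP, hPQ, hQP, hQ, zero_smul, add_zero, zero_add]
  exact max_le_max (h.norm_smul_le x) (h.norm_one_sub_smul_le y)

variable {𝕜 E : Type*} [RCLike 𝕜] [NormedAddCommGroup E] [NormedSpace 𝕜 E]

theorem norm_sub_comp_le {P : E →L[𝕜] E} (h : IsMprojection E P) (m : StrongDual 𝕜 E) {x : E}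
    (hx : ‖x‖ ≤ 1) : ‖m - m.comp P‖ ≤ ‖m‖ - ‖m (P x)‖ := by
  have hPx : ‖P x‖ ≤ 1 := (h.norm_smul_le x).trans hx
  have hmPx : ‖m (P x)‖ ≤ ‖m‖ := (m.le_opNorm _).trans (mul_le_of_le_one_right (norm_nonneg m) hPx)
  refine ContinuousLinearMap.opNorm_le_bound _ (sub_nonneg.2 hmPx) fun y => ?_
  -- Test `m` on `z = P (c ‖y‖ x) + (1 - P) (d y)`, the unimodular `c`, `d` aligning the phases.
  obtain ⟨c, hc, hcx⟩ := RCLike.exists_norm_eq_mul_self (m (P x))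
  obtain ⟨d, hd, hdy⟩ := RCLike.exists_norm_eq_mul_self (m ((1 - P) y))
  have hz : ‖P ((c * ‖y‖) • x) + (1 - P) (d • y)‖ ≤ ‖y‖ := by
    have hmax := h.norm_smul_add_one_sub_smul_le ((c * ‖y‖) • x) (d • y)
    simp only [ContinuousLinearMap.smul_def] at hmax
    refine hmax.trans (max_le ?_ ?_)
    · rw [norm_smul, norm_mul, hc, one_mul, RCLike.norm_ofReal, abs_norm]
      exact mul_le_of_le_one_right (norm_nonneg y) hx
    · rw [norm_smul, hd, one_mul]
  have hmz : m (P ((c * ‖y‖) • x) + (1 - P) (d • y)) =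
      ((‖y‖ * ‖m (P x)‖ + ‖m ((1 - P) y)‖ : ℝ) : 𝕜) := by
    rw [map_add, map_smul, map_smul, map_smul, map_smul, smul_eq_mul, smul_eq_mul,
      RCLike.ofReal_add, RCLike.ofReal_mul, hcx, hdy]
    ring
  have hmz_le := (m.le_opNorm _).trans (mul_le_mul_of_nonneg_left hz (norm_nonneg m))
  rw [hmz, RCLike.norm_ofReal, abs_of_nonneg (by positivity)] at hmz_le
  have hQy : (m - m.comp P) y = m ((1 - P) y) := by simp
  rw [hQy]
  linarith

variable {𝕜 E : Type*} [NormedField 𝕜] [NormedAddCommGroup E] [NormedSpace 𝕜 E]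

theorem codRestrict {P : E →L[𝕜] E} (h : IsMprojection E P) (S : Submodule 𝕜 E)
    (hS : ∀ x : S, P x ∈ S) : IsMprojection S ((P.comp S.subtypeL).codRestrict S hS) where
  proj := ContinuousLinearMap.ext fun x => Subtype.ext (congrArg (· x) h.proj)
  Mnorm x := by
    have hx := h.Mnorm x
    simp only [ContinuousLinearMap.smul_def, sub_apply, one_apply_eq_self] at hx ⊢
    exact hx

end IsMprojection

namespace MeasureTheory.Lp

variable {α E 𝕜 : Type*} [MeasurableSpace α] {μ : Measure α} [NormedAddCommGroup E]
  [NormedField 𝕜] [NormedSpace 𝕜 E] {p : ℝ≥0∞} {s : Set α}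

def indicator (hs : MeasurableSet s) (f : Lp E p μ) : Lp E p μ :=
  ((Lp.memLp f).indicator hs).toLp (s.indicator f)

theorem coeFn_indicator (hs : MeasurableSet s) (f : Lp E p μ) :
    ⇑(indicator hs f) =ᵐ[μ] s.indicator f :=
  MemLp.coeFn_toLp _

theorem indicator_add (hs : MeasurableSet s) (f g : Lp E p μ) :
    indicator hs (f + g) = indicator hs f + indicator hs g := by
  refine Lp.ext ?_
  filter_upwards [coeFn_indicator hs (f + g), coeFn_indicator hs f, coeFn_indicator hs g,
    Lp.coeFn_add f g, Lp.coeFn_add (indicator hs f) (indicator hs g)] with x hfg hf hg hadd hadd'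
  rw [hfg, hadd', Pi.add_apply, hf, hg]
  by_cases hx : x ∈ s
  · simpa only [Set.indicator_of_mem hx, Pi.add_apply] using hadd
  · simp only [Set.indicator_of_notMem hx, add_zero]

theorem indicator_smul (hs : MeasurableSet s) (c : 𝕜) (f : Lp E p μ) :
    indicator hs (c • f) = c • indicator hs f := by
  refine Lp.ext ?_
  filter_upwards [coeFn_indicator hs (c • f), coeFn_indicator hs f,
    Lp.coeFn_smul c f, Lp.coeFn_smul c (indicator hs f)] with x hcf hf hsmul hsmul'
  rw [hcf, hsmul', Pi.smul_apply, hf]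
  by_cases hx : x ∈ s
  · simpa only [Set.indicator_of_mem hx, Pi.smul_apply] using hsmul
  · simp only [Set.indicator_of_notMem hx, smul_zero]

theorem norm_indicator_le [Fact (1 ≤ p)] (hs : MeasurableSet s) (f : Lp E p μ) :
    ‖indicator hs f‖ ≤ ‖f‖ := by
  refine Lp.norm_le_norm_of_ae_le ?_
  filter_upwards [coeFn_indicator hs f] with x hx
  exact hx ▸ norm_indicator_le_norm_self _ _

theorem coeFn_sub_indicator (hs : MeasurableSet s) (f : Lp E p μ) :
    ⇑(f - indicator hs f) =ᵐ[μ] sᶜ.indicator f := by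
  filter_upwards [Lp.coeFn_sub f (indicator hs f), coeFn_indicator hs f] with x hsub hf
  rw [hsub, Pi.sub_apply, hf, sub_eq_iff_eq_add', Set.indicator_self_add_compl_apply]

theorem norm_sub_indicator_le [Fact (1 ≤ p)] (hs : MeasurableSet s) (f : Lp E p μ) :
    ‖f - indicator hs f‖ ≤ ‖f‖ := by
  refine Lp.norm_le_norm_of_ae_le ?_
  filter_upwards [coeFn_sub_indicator hs f] with x hx
  exact hx ▸ norm_indicator_le_norm_self _ _

theorem ae_norm_le_norm_top (f : Lp E ∞ μ) : ∀ᵐ x ∂μ, ‖f x‖ ≤ ‖f‖ := by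
  have hf : eLpNormEssSup f μ ≠ ∞ := eLpNorm_exponent_top (f := ⇑f) ▸ (Lp.eLpNorm_lt_top f).ne
  filter_upwards [enorm_ae_le_eLpNormEssSup f μ] with x hx
  rw [Lp.norm_def, eLpNorm_exponent_top, ← toReal_enorm]
  exact ENNReal.toReal_mono hf hx

theorem norm_top_le_of_ae_bound {f : Lp E ∞ μ} {C : ℝ} (hC : 0 ≤ C) (h : ∀ᵐ x ∂μ, ‖f x‖ ≤ C) :
    ‖f‖ ≤ C := by
  rw [Lp.norm_def, eLpNorm_exponent_top]
  exact ENNReal.toReal_le_of_le_ofReal hC (eLpNormEssSup_le_of_ae_bound h)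

theorem norm_eq_max_indicator (hs : MeasurableSet s) (f : Lp E ∞ μ) :
    ‖f‖ = max ‖indicator hs f‖ ‖f - indicator hs f‖ := by
  refine le_antisymm ?_ (max_le (norm_indicator_le hs f) ?_)
  · refine norm_top_le_of_ae_bound ((norm_nonneg _).trans (le_max_left _ _)) ?_
    filter_upwards [coeFn_indicator hs f, coeFn_sub_indicator hs f,
      ae_norm_le_norm_top (indicator hs f), ae_norm_le_norm_top (f - indicator hs f)]
      with x hPf hQf hPx hQx
    by_cases hx : x ∈ s
    · rw [hPf, Set.indicator_of_mem hx] at hPx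
      exact hPx.trans (le_max_left _ _)
    · rw [hQf, Set.indicator_of_mem hx] at hQx
      exact hQx.trans (le_max_right _ _)
  · exact norm_sub_indicator_le hs f

theorem indicator_indicator (hs : MeasurableSet s) (f : Lp E p μ) :
    indicator hs (indicator hs f) = indicator hs f := by
  refine Lp.ext ?_
  filter_upwards [coeFn_indicator hs (indicator hs f), coeFn_indicator hs f] with x hPPf hPf
  by_cases hx : x ∈ s
  · rw [hPPf, Set.indicator_of_mem hx, hPf]
  · rw [hPPf, hPf, Set.indicator_of_notMem hx, Set.indicator_of_notMem hx]

end MeasureTheory.Lp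

namespace GLpaper

namespace GenFun

variable {G : Type} [Group G] [TopologicalSpace G] [MeasurableSpace G] {K : Set G}

theorem sub_toFun (f g : GenFun G) (μ : MG G) : (f - g).toFun μ = f.toFun μ - g.toFun μ :=
  (sub_eq_add_neg _ _).symm

@[simps]
def indicator (hK : MeasurableSet K) (f : GenFun G) : GenFun G where
  toFun μ := Lp.indicator hK (f.toFun μ)
  compat μ ν h := by
    filter_upwards [Lp.coeFn_indicator hK (f.toFun μ),
      h.ae_le (Lp.coeFn_indicator hK (f.toFun ν)), f.compat μ ν h] with x hμ hν hf
    rw [hμ, hν]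
    simp only [Set.indicator, hf]
  bdd := by
    obtain ⟨C, hC⟩ := f.bdd
    exact ⟨C, Set.forall_mem_range.2 fun μ =>
      (Lp.norm_indicator_le hK _).trans (hC (Set.mem_range_self μ))⟩

theorem norm_indicator_le (hK : MeasurableSet K) (f : GenFun G) : ‖indicator hK f‖ ≤ ‖f‖ :=
  gnorm_le (norm_nonneg f) fun μ => (Lp.norm_indicator_le hK _).trans (norm_le_gnorm f μ)

def indicatorCLM (hK : MeasurableSet K) : GenFun G →L[ℂ] GenFun G :=
  LinearMap.mkContinuous
    { toFun := indicator hK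
      map_add' _ _ := ext' fun _ => Lp.indicator_add hK _ _
      map_smul' c _ := ext' fun _ => Lp.indicator_smul hK c _ }
    1 fun f => (one_mul ‖f‖).symm ▸ norm_indicator_le hK f

@[simp]
theorem indicatorCLM_apply (hK : MeasurableSet K) (f : GenFun G) :
    indicatorCLM hK f = indicator hK f :=
  rfl

theorem isMprojection_indicatorCLM (hK : MeasurableSet K) :
    IsMprojection (GenFun G) (indicatorCLM hK) where
  proj := ContinuousLinearMap.ext fun f => ext' fun μ => Lp.indicator_indicator hK _
  Mnorm f := by
    simp only [ContinuousLinearMap.smul_def, sub_apply, one_apply_eq_self, indicatorCLM_apply]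
    refine le_antisymm (gnorm_le ((norm_nonneg _).trans (le_max_left _ _)) fun μ => ?_)
      (max_le (norm_indicator_le hK f) (gnorm_le (norm_nonneg f) fun μ => ?_))
    · rw [Lp.norm_eq_max_indicator hK (f.toFun μ)]
      exact max_le_max (norm_le_gnorm (indicator hK f) μ)
        (sub_toFun f (indicator hK f) μ ▸ norm_le_gnorm (f - indicator hK f) μ)
    · rw [sub_toFun]
      exact (Lp.norm_sub_indicator_le hK _).trans (norm_le_gnorm f μ)

theorem indicator_eq_of_isIndMul (hK : MeasurableSet K) {f g : GenFun G}
    (hfg : IsIndMul G K f g) : indicator hK g = indicator hK f :=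
  ext' fun μ => Lp.ext <| by
    filter_upwards [Lp.coeFn_indicator hK (g.toFun μ), Lp.coeFn_indicator hK (f.toFun μ),
      hfg μ] with x hg hf hgf
    rw [indicator_toFun, indicator_toFun, hg, hf]
    simp only [Set.indicator, hgf]
    split_ifs <;> rfl

end GenFun

variable {G : Type} [Group G] [TopologicalSpace G] [MeasurableSpace G] [T2Space G] [BorelSpace G]
  {K : Set G}

theorem GenFun.indicator_mem_GL0 (hK : IsCompact K) (f : GenFun G) :
    GenFun.indicator hK.measurableSet f ∈ GL0 G := by
  intro ε hε
  refine ⟨K, hK, fun μ => ?_⟩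
  have hzero : Kᶜ.indicator ⇑((GenFun.indicator hK.measurableSet f).toFun μ)
      =ᵐ[cmAbs G μ.toCM] 0 := by
    filter_upwards [Lp.coeFn_indicator hK.measurableSet (f.toFun μ)] with x hx
    by_cases hxK : x ∈ K
    · simp [hxK]
    · simp [hxK, hx, indicator_toFun]
  rw [eLpNorm_congr_ae hzero, eLpNorm_zero]
  exact ENNReal.ofReal_pos.2 hε

def indicatorGL0 (hK : IsCompact K) : GL0 G →L[ℂ] GL0 G :=
  ((GenFun.indicatorCLM hK.measurableSet).comp (GL0 G).subtypeL).codRestrict (GL0 G)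
    fun f => GenFun.indicator_mem_GL0 hK f

theorem isMprojection_indicatorGL0 (hK : IsCompact K) :
    IsMprojection (GL0 G) (indicatorGL0 hK) :=
  (GenFun.isMprojection_indicatorCLM hK.measurableSet).codRestrict _ _

theorem hasCarrier0_comp_indicatorGL0 (m : DualGL0 G) (hK : IsCompact K) :
    HasCarrier0 G (m.comp (indicatorGL0 hK)) K :=
  ⟨hK, fun _ _ hfg => congrArg m (Subtype.ext (GenFun.indicator_eq_of_isIndMul _ hfg))⟩

theorem exists_isCompact_norm_sub_indicatorGL0_le (f : GL0 G) {δ : ℝ} (hδ : 0 < δ) :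
    ∃ K, ∃ hK : IsCompact K, ‖f - indicatorGL0 hK f‖ ≤ δ := by
  obtain ⟨K, hK, hfK⟩ := f.2 δ hδ
  refine ⟨K, hK, GenFun.gnorm_le hδ.le fun μ => ?_⟩
  change ‖((f : GenFun G) - GenFun.indicator hK.measurableSet f).toFun μ‖ ≤ δ
  rw [GenFun.sub_toFun, GenFun.indicator_toFun, Lp.norm_def,
    eLpNorm_congr_ae (Lp.coeFn_sub_indicator hK.measurableSet _)]
  exact ENNReal.toReal_le_of_le_ofReal hδ.le (hfK μ).le

end GLpaper

theorem stmt_7_general (G : Type) [Group G] [TopologicalSpace G]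
    [T2Space G] [MeasurableSpace G] [BorelSpace G]
    (m : DualGL0 G) (ε : ℝ) (hε : 0 < ε) :
    ∃ m' : DualGL0 G, (∃ K : Set G, HasCarrier0 G m' K) ∧ ‖m - m'‖ < ε := by
  set δ := ε / (1 + ‖m‖)
  have hδ : 0 < δ := by positivity
  obtain ⟨f₀, hf₀, hmf₀⟩ := m.exists_lt_apply_of_lt_opNorm (sub_lt_self ‖m‖ hδ)
  obtain ⟨K, hK, hf₀K⟩ := exists_isCompact_norm_sub_indicatorGL0_le f₀ hδ
  refine ⟨m.comp (indicatorGL0 hK), ⟨K, hasCarrier0_comp_indicatorGL0 m hK⟩, ?_⟩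
  have hmP : ‖m f₀‖ - ‖m (indicatorGL0 hK f₀)‖ ≤ ‖m‖ * δ :=
    calc ‖m f₀‖ - ‖m (indicatorGL0 hK f₀)‖ ≤ ‖m (f₀ - indicatorGL0 hK f₀)‖ :=
          map_sub m _ _ ▸ norm_sub_norm_le _ _
      _ ≤ ‖m‖ * δ := (m.le_opNorm _).trans (by gcongr)
  have hδε : δ + ‖m‖ * δ = ε := by
    rw [← one_add_mul, mul_div_cancel₀ _ (by positivity)]
  calc ‖m - m.comp (indicatorGL0 hK)‖ ≤ ‖m‖ - ‖m (indicatorGL0 hK f₀)‖ :=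
        (isMprojection_indicatorGL0 hK).norm_sub_comp_le m hf₀.le
    _ < ε := by linarith

/-- Functionals in `GL₀(G)*` with compact carrier are norm
dense in `GL₀(G)*`. -/
theorem stmt_7 (G : Type) [Group G] [TopologicalSpace G] [IsTopologicalGroup G]
    [LocallyCompactSpace G] [T2Space G] [MeasurableSpace G] [BorelSpace G]
    (m : DualGL0 G) (ε : ℝ) (hε : 0 < ε) :
    ∃ m' : DualGL0 G, (∃ K : Set G, HasCarrier0 G m' K) ∧ ‖m - m'‖ < ε :=
  stmt_7_general G m ε hε
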